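/- Let $\mathcal{L}_{\mathrm{ovd}} = -\nabla V\cdot\nabla_q + \beta^{-1}\Delta_q$ on the torus $\mathcal{M}$ with smooth $V$, which is symmetric on $L^2(\bar\mu)$ with $\bar\mu \propto e^{-\beta V}$ and invertible on mean-zero smooth functions. Fix $F \in \mathbb{R}^{dN}$ and let $u = \mathcal{L}_{\mathrm{ovd}}^{-1}(F\cdot\nabla V)$ (well-defined since $\int F\cdot\nabla V\,d\bar\mu = 0$). Then $\int_{\mathcal{M}} |F + \nabla_q u|^2\,d\bar\mu = |F|^2 + \beta\int_{\mathcal{M}} (F\cdot\nabla V)\, u \, d\bar\mu$. -/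

import Mathlib

open MeasureTheory Real

noncomputable section

variable {d : ℕ}

/-- Partial derivative in direction `i`. -/
def pderiv (f : (Fin d → ℝ) → ℝ) (i : Fin d) (q : Fin d → ℝ) : ℝ :=
  fderiv ℝ f q (Pi.single i 1)

/-- Laplacian on `ℝ^d`. -/
def lap (f : (Fin d → ℝ) → ℝ) (q : Fin d → ℝ) : ℝ :=
  ∑ i, fderiv ℝ (fun y => fderiv ℝ f y (Pi.single i 1)) q (Pi.single i 1)

/-- `L`-periodicity in every coordinate direction (functions on the torus `(Lℝ/ℤ)^d`). -/
def PeriodicOn (L : ℝ) (f : (Fin d → ℝ) → ℝ) : Prop :=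
  ∀ (q : Fin d → ℝ) (i : Fin d), f (q + Pi.single i L) = f q

/-- The fundamental domain `[0,L)^d` of the torus. -/
def box (d : ℕ) (L : ℝ) : Set (Fin d → ℝ) :=
  Set.univ.pi fun _ => Set.Ico (0 : ℝ) L

/-- The Boltzmann–Gibbs measure `μ̄(dq) = Z̃⁻¹ e^{-βV(q)} dq` on the torus. -/
def mubar (d : ℕ) (L β Ztil : ℝ) (V : (Fin d → ℝ) → ℝ) : Measure (Fin d → ℝ) :=
  (volume.restrict (box d L)).withDensity fun q =>
    ENNReal.ofReal (Ztil⁻¹ * Real.exp (-β * V q))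

/-- Overdamped generator `ℒ_ovd = -∇V⋅∇ + β⁻¹Δ`. -/
def LovdOp (β : ℝ) (V h : (Fin d → ℝ) → ℝ) (q : Fin d → ℝ) : ℝ :=
  -(∑ i, pderiv V i q * pderiv h i q) + β⁻¹ * lap h q

/-! ### Auxiliary lemmas -/

lemma contDiff_pderiv {f : (Fin d → ℝ) → ℝ} (hf : ContDiff ℝ (⊤ : ℕ∞) f) (i : Fin d) :
    ContDiff ℝ (⊤ : ℕ∞) (pderiv f i) := by
  have h1 : ContDiff ℝ (⊤ : ℕ∞) (fderiv ℝ f) := hf.fderiv_right (by simp)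
  exact (ContinuousLinearMap.apply ℝ ℝ ((Pi.single i 1 : Fin d → ℝ))).contDiff.comp h1

lemma box_subset_Icc (L : ℝ) :
    box d L ⊆ Set.Icc (0 : Fin d → ℝ) (fun _ => L) := by
  intro x hx
  constructor <;> intro j
  · exact (hx j (Set.mem_univ j)).1
  · exact le_of_lt (hx j (Set.mem_univ j)).2

lemma integrableOn_box {f : (Fin d → ℝ) → ℝ} (hf : Continuous f) (L : ℝ) :
    IntegrableOn f (box d L) :=
  ((hf.continuousOn).integrableOn_compact isCompact_Icc).mono_set (box_subset_Icc L)

lemma pderiv_periodic {L : ℝ} {f : (Fin d → ℝ) → ℝ} (hf : Differentiable ℝ f)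
    (hper : PeriodicOn L f) (i : Fin d) : PeriodicOn L (pderiv f i) := by
  intro q j
  have h2 : HasFDerivAt (fun x : Fin d → ℝ => x + Pi.single j L)
      (ContinuousLinearMap.id ℝ (Fin d → ℝ)) q := (hasFDerivAt_id q).add_const _
  have h1 : HasFDerivAt (fun x => f (x + Pi.single j L))
      (fderiv ℝ f (q + Pi.single j L)) q := by
    simpa [Function.comp_def] using (hf (q + Pi.single j L)).hasFDerivAt.comp q h2
  have h3 : (fun x => f (x + Pi.single j L)) = f := funext fun x => hper x j
  rw [h3] at h1
  show fderiv ℝ f (q + Pi.single j L) (Pi.single i 1) = fderiv ℝ f q (Pi.single i 1)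
  rw [h1.fderiv]

/-- Key lemma: the integral over the fundamental domain of a partial derivative of a
smooth periodic function vanishes. -/
lemma integral_box_pderiv_eq_zero {L : ℝ} (hL : 0 ≤ L) (g : (Fin d → ℝ) → ℝ)
    (hg : ContDiff ℝ (⊤ : ℕ∞) g) (hper : PeriodicOn L g) (i : Fin d) :
    ∫ q in box d L, pderiv g i q = 0 := by
  obtain ⟨n, rfl⟩ : ∃ n, d = n + 1 :=
    ⟨d - 1, (Nat.succ_pred_eq_of_ne_zero (by rintro rfl; exact i.elim0)).symm⟩
  set a : Fin (n + 1) → ℝ := 0 with ha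
  set b : Fin (n + 1) → ℝ := fun _ => L with hb
  have hle : a ≤ b := fun j => hL
  have hstep1 : ∫ q in box (n + 1) L, pderiv g i q = ∫ q in Set.Icc a b, pderiv g i q := by
    rw [box, volume_pi]
    exact setIntegral_congr_set Measure.univ_pi_Ico_ae_eq_Icc
  have hgd : ∀ x, HasFDerivAt g (fderiv ℝ g x) x :=
    fun x => (hg.differentiable (by simp) x).hasFDerivAt
  have hcont : Continuous (pderiv g i) := (contDiff_pderiv hg i).continuous
  -- the vector field: `g` in direction `i`, `0` elsewhere
  set f : Fin (n + 1) → (Fin (n + 1) → ℝ) → ℝ := fun j => if j = i then g else fun _ => 0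
    with hf
  set f' : Fin (n + 1) → (Fin (n + 1) → ℝ) → (Fin (n + 1) → ℝ) →L[ℝ] ℝ :=
    fun j x => if j = i then fderiv ℝ g x else 0 with hf'
  have hsum : ∀ x, (∑ j, f' j x (Pi.single j 1)) = pderiv g i x := by
    intro x
    have h : ∀ j : Fin (n + 1),
        f' j x (Pi.single j (1 : ℝ)) = if j = i then pderiv g i x else 0 := by
      intro j
      by_cases h : j = i
      · subst h; simp [hf', pderiv]
      · simp [hf', h]
    rw [Finset.sum_congr rfl fun j _ => h j, Finset.sum_ite_eq' Finset.univ i]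
    simp
  have key := integral_divergence_of_hasFDerivAt_off_countable' a b hle f f' ∅
    Set.countable_empty
    (by
      intro j
      by_cases h : j = i
      · subst h; simpa [hf] using hg.continuous.continuousOn
      · simpa [hf, h] using continuousOn_const)
    (by
      intro x _ j
      by_cases h : j = i
      · subst h; simpa [hf, hf'] using hgd x
      · simpa [hf, hf', h] using hasFDerivAt_const (0 : ℝ) x)
    (by
      have h : (fun x => ∑ j, f' j x (Pi.single j 1)) = pderiv g i := funext hsum
      rw [h]
      exact (hcont.continuousOn).integrableOn_compact isCompact_Icc)
  have hface : ∀ j : Fin (n + 1),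
      ((∫ x in Set.Icc (a ∘ j.succAbove) (b ∘ j.succAbove), f j (j.insertNth (b j) x))
        - ∫ x in Set.Icc (a ∘ j.succAbove) (b ∘ j.succAbove), f j (j.insertNth (a j) x)) = 0 := by
    intro j
    by_cases h : j = i
    · subst h
      have hins : ∀ x : Fin n → ℝ,
          (j.insertNth L x : Fin (n + 1) → ℝ)
            = (j.insertNth (0 : ℝ) x : Fin (n + 1) → ℝ) + Pi.single j L := by
        intro x; funext k
        rcases eq_or_ne k j with rfl | hk
        · simp
        · rcases Fin.exists_succAbove_eq hk with ⟨m, rfl⟩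
          simp [Fin.insertNth_apply_succAbove, Pi.single_eq_of_ne hk]
      have hpoint : ∀ x : Fin n → ℝ, f j (j.insertNth (b j) x) = f j (j.insertNth (a j) x) := by
        intro x
        have hg0 : g (j.insertNth L x) = g (j.insertNth (0 : ℝ) x) := by
          rw [hins x]; exact hper _ j
        simpa [hf, ha, hb] using hg0
      rw [show (fun x => f j (j.insertNth (b j) x)) = fun x => f j (j.insertNth (a j) x) from
        funext hpoint]
      exact sub_self _
    · simp [hf, h]
  have hLHS : ∫ q in Set.Icc a b, pderiv g i q
      = ∫ x in Set.Icc a b, ∑ j, f' j x (Pi.single j 1) :=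
    setIntegral_congr_fun measurableSet_Icc fun x _ => (hsum x).symm
  rw [hstep1, hLHS, key]
  exact Finset.sum_eq_zero fun j _ => hface j

/-- Integrals against `mubar`. -/
lemma integral_mubar_eq {L β Ztil : ℝ} (hZ : 0 < Ztil) {V : (Fin d → ℝ) → ℝ}
    (hVc : Continuous V) (f : (Fin d → ℝ) → ℝ) :
    ∫ q, f q ∂(mubar d L β Ztil V)
      = Ztil⁻¹ * ∫ q in box d L, Real.exp (-β * V q) * f q := by
  unfold mubar
  have hmeas : Measurable (fun q => (Ztil⁻¹ * Real.exp (-β * V q)).toNNReal) :=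
    (continuous_real_toNNReal.comp
      (continuous_const.mul (Real.continuous_exp.comp (continuous_const.mul hVc)))).measurable
  rw [show (fun q => ENNReal.ofReal (Ztil⁻¹ * Real.exp (-β * V q)))
      = fun q => ((Ztil⁻¹ * Real.exp (-β * V q)).toNNReal : ENNReal) from rfl]
  rw [integral_withDensity_eq_integral_smul hmeas]
  rw [← integral_const_mul]
  congr 1
  funext q
  rw [NNReal.smul_def, smul_eq_mul, Real.coe_toNNReal _ (by positivity)]
  ring

/-- If `u = ℒ_ovd⁻¹(F⋅∇V)`, then
`∫ |F + ∇u|² dμ̄ = |F|² + β ∫ (F⋅∇V) u dμ̄`. -/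
theorem einstein_mobility_identity
    (L β Ztil : ℝ) (hL : 0 < L) (hβ : 0 < β)
    (V : (Fin d → ℝ) → ℝ) (hV : ContDiff ℝ (⊤ : ℕ∞) V) (hVper : PeriodicOn L V)
    (hZ : Ztil = ∫ q in box d L, Real.exp (-β * V q))
    (F : Fin d → ℝ)
    (u : (Fin d → ℝ) → ℝ) (hu : ContDiff ℝ (⊤ : ℕ∞) u) (huper : PeriodicOn L u)
    -- `u` solves the Poisson equation `ℒ_ovd u = F⋅∇V`
    (hpoisson : ∀ q, LovdOp β V u q = ∑ i, F i * pderiv V i q) :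
    ∫ q, (∑ i, (F i + pderiv u i q) ^ 2) ∂(mubar d L β Ztil V)
      = (∑ i, F i ^ 2)
        + β * ∫ q, (∑ i, F i * pderiv V i q) * u q ∂(mubar d L β Ztil V) := by
  have hVd : Differentiable ℝ V := hV.differentiable (by simp)
  have hud : Differentiable ℝ u := hu.differentiable (by simp)
  have hVc : Continuous V := hV.continuous
  set E : (Fin d → ℝ) → ℝ := fun q => Real.exp (-β * V q) with hE
  have cE : ContDiff ℝ (⊤ : ℕ∞) E := Real.contDiff_exp.comp (contDiff_const.mul hV)
  have hEc : Continuous E := cE.continuous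
  have hEpos : ∀ q, 0 < E q := fun q => Real.exp_pos _
  -- positivity of the partition function
  have hZpos : 0 < Ztil := by
    rw [hZ]
    have hint : IntegrableOn E (box d L) := integrableOn_box hEc L
    refine (setIntegral_pos_iff_support_of_nonneg_ae
      (Filter.Eventually.of_forall fun q => (hEpos q).le) hint).mpr ?_
    have hsupp : Function.support E = Set.univ := by
      ext q; simp [Function.support, (hEpos q).ne']
    rw [hsupp, Set.univ_inter, box, volume_pi_pi]
    simp only [Real.volume_Ico, sub_zero, Finset.prod_const]
    exact ENNReal.pow_pos (ENNReal.ofReal_pos.mpr hL) _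
  -- continuity facts
  have cPu : ∀ i, ContDiff ℝ (⊤ : ℕ∞) (pderiv u i) := fun i => contDiff_pderiv hu i
  have cPV : ∀ i, ContDiff ℝ (⊤ : ℕ∞) (pderiv V i) := fun i => contDiff_pderiv hV i
  -- periodicity facts
  have perE : PeriodicOn L E := by
    intro q j; simp only [hE]; rw [hVper q j]
  have perPu : ∀ i, PeriodicOn L (pderiv u i) := fun i => pderiv_periodic hud huper i
  -- derivative of `E`
  have hEder : ∀ q, HasFDerivAt E (E q • ((-β) • fderiv ℝ V q)) q := fun q =>
    ((hVd q).hasFDerivAt.const_mul (-β)).exp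
  -- ## Identity (B): ∫ ∂ᵢu E = β ∫ ∂ᵢV u E
  have hBder : ∀ (i : Fin d) (q : Fin d → ℝ),
      pderiv (fun q' => u q' * E q') i q
        = pderiv u i q * E q - β * (pderiv V i q * u q * E q) := by
    intro i q
    have h3 : HasFDerivAt (fun q' => u q' * E q')
        (u q • (E q • ((-β) • fderiv ℝ V q)) + E q • fderiv ℝ u q) q :=
      (hud q).hasFDerivAt.mul (hEder q)
    show fderiv ℝ (fun q' => u q' * E q') q (Pi.single i 1) = _
    rw [h3.fderiv]
    simp only [ContinuousLinearMap.add_apply, ContinuousLinearMap.smul_apply, smul_eq_mul,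
      pderiv]
    ring
  have hB : ∀ i : Fin d,
      (∫ q in box d L, pderiv u i q * E q)
        = β * ∫ q in box d L, pderiv V i q * u q * E q := by
    intro i
    have h1 : ∫ q in box d L, pderiv (fun q' => u q' * E q') i q = 0 :=
      integral_box_pderiv_eq_zero hL.le _ (hu.mul cE)
        (fun q j => by
          show u (q + Pi.single j L) * E (q + Pi.single j L) = u q * E q
          rw [huper q j, perE q j]) i
    rw [show (fun q => pderiv (fun q' => u q' * E q') i q)
        = fun q => pderiv u i q * E q - β * (pderiv V i q * u q * E q) from
      funext fun q => hBder i q] at h1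
    have hi1 : IntegrableOn (fun q => pderiv u i q * E q) (box d L) :=
      integrableOn_box (((cPu i).continuous).mul hEc) L
    have hi2 : IntegrableOn (fun q => β * (pderiv V i q * u q * E q)) (box d L) :=
      integrableOn_box (continuous_const.mul
        ((((cPV i).continuous).mul hu.continuous).mul hEc)) L
    rw [integral_sub hi1 hi2, integral_const_mul, sub_eq_zero] at h1
    exact h1
  -- laplacian of u equals sum of second pderivs
  have hlap : ∀ q, lap u q = ∑ i, pderiv (pderiv u i) i q := fun q => rfl
  -- Poisson equation rearranged
  have hpois' : ∀ q, (∑ i, pderiv (pderiv u i) i q)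
      = β * ((∑ i, F i * pderiv V i q) + ∑ i, pderiv V i q * pderiv u i q) := by
    intro q
    have h := hpoisson q
    rw [LovdOp] at h
    have h2 : β⁻¹ * lap u q = (∑ i, F i * pderiv V i q)
        + ∑ i, pderiv V i q * pderiv u i q := by linarith
    have h3 : lap u q = β * (β⁻¹ * lap u q) := by
      field_simp
    rw [← hlap, h3, h2]
  -- ## Identity (D): ∫ |∇u|² E = -β ∫ (F⋅∇V) u E
  have hDder : ∀ (i : Fin d) (q : Fin d → ℝ),
      pderiv (fun q' => u q' * pderiv u i q' * E q') i q
        = (pderiv u i q * pderiv u i q + u q * pderiv (pderiv u i) i q) * E q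
          - β * (pderiv V i q * (u q * pderiv u i q) * E q) := by
    intro i q
    have h12 : HasFDerivAt (fun q' => u q' * pderiv u i q')
        (u q • fderiv ℝ (pderiv u i) q + pderiv u i q • fderiv ℝ u q) q :=
      (hud q).hasFDerivAt.mul ((cPu i).differentiable (by simp) q).hasFDerivAt
    have h3 : HasFDerivAt (fun q' => u q' * pderiv u i q' * E q')
        ((u q * pderiv u i q) • (E q • ((-β) • fderiv ℝ V q))
          + E q • (u q • fderiv ℝ (pderiv u i) q + pderiv u i q • fderiv ℝ u q)) q :=
      h12.mul (hEder q)
    show fderiv ℝ (fun q' => u q' * pderiv u i q' * E q') q (Pi.single i 1) = _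
    rw [h3.fderiv]
    simp only [ContinuousLinearMap.add_apply, ContinuousLinearMap.smul_apply, smul_eq_mul,
      pderiv]
    ring
  -- pointwise form of the summed divergence
  have hpt : ∀ q, (∑ i, pderiv (fun q' => u q' * pderiv u i q' * E q') i q)
      = (∑ i, pderiv u i q ^ 2) * E q + β * ((∑ i, F i * pderiv V i q) * u q * E q) := by
    intro q
    have step1 : (∑ i, pderiv (fun q' => u q' * pderiv u i q' * E q') i q)
        = (∑ i, pderiv u i q ^ 2 * E q)
          + (u q * E q) * (∑ i, pderiv (pderiv u i) i q)
          - (β * (u q * E q)) * (∑ i, pderiv V i q * pderiv u i q) := by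
      rw [Finset.sum_congr rfl fun i _ => hDder i q]
      rw [Finset.sum_sub_distrib, Finset.mul_sum, Finset.mul_sum, ← Finset.sum_add_distrib]
      congr 1
      · exact Finset.sum_congr rfl fun i _ => by ring
      · exact Finset.sum_congr rfl fun i _ => by ring
    rw [step1, hpois' q, Finset.sum_mul]
    ring
  have hD : (∫ q in box d L, (∑ i, pderiv u i q ^ 2) * E q)
      = -(β * ∫ q in box d L, (∑ i, F i * pderiv V i q) * u q * E q) := by
    have hsum0 : ∫ q in box d L,
        (∑ i, pderiv (fun q' => u q' * pderiv u i q' * E q') i q) = 0 := by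
      rw [integral_finset_sum]
      · exact Finset.sum_eq_zero fun i _ =>
          integral_box_pderiv_eq_zero hL.le _ ((hu.mul (cPu i)).mul cE)
            (fun q j => by
              show u (q + Pi.single j L) * pderiv u i (q + Pi.single j L)
                  * E (q + Pi.single j L) = u q * pderiv u i q * E q
              rw [huper q j, perPu i q j, perE q j]) i
      · intro i _
        have hc : Continuous (fun q => pderiv (fun q' => u q' * pderiv u i q' * E q') i q) := by
          rw [show (fun q => pderiv (fun q' => u q' * pderiv u i q' * E q') i q)
            = fun q => (pderiv u i q * pderiv u i q + u q * pderiv (pderiv u i) i q) * E q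
              - β * (pderiv V i q * (u q * pderiv u i q) * E q) from funext fun q => hDder i q]
          exact (((((cPu i).continuous).mul ((cPu i).continuous)).add
            (hu.continuous.mul (contDiff_pderiv (cPu i) i).continuous)).mul hEc).sub
            (continuous_const.mul ((((cPV i).continuous).mul
              (hu.continuous.mul (cPu i).continuous)).mul hEc))
        exact integrableOn_box hc L
    rw [show (fun q => ∑ i, pderiv (fun q' => u q' * pderiv u i q' * E q') i q)
        = fun q => (∑ i, pderiv u i q ^ 2) * E q
          + β * ((∑ i, F i * pderiv V i q) * u q * E q) from funext hpt] at hsum0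
    have hcsum : ∀ j : Fin d, Continuous (fun q : Fin d → ℝ => pderiv u j q ^ 2) := fun j =>
      ((cPu j).continuous).pow 2
    have hi1 : IntegrableOn (fun q => (∑ i, pderiv u i q ^ 2) * E q) (box d L) :=
      integrableOn_box ((continuous_finset_sum _ fun j _ => hcsum j).mul hEc) L
    have hi2 : IntegrableOn
        (fun q => β * ((∑ i, F i * pderiv V i q) * u q * E q)) (box d L) :=
      integrableOn_box (continuous_const.mul
        ((((continuous_finset_sum _ fun j _ => continuous_const.mul (cPV j).continuous)).mul
          hu.continuous).mul hEc)) L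
    rw [integral_add hi1 hi2, integral_const_mul] at hsum0
    linarith
  -- ## Identity (B) summed against F
  have hIB : (∫ q in box d L, (∑ i, F i * pderiv u i q) * E q)
      = β * ∫ q in box d L, (∑ i, F i * pderiv V i q) * u q * E q := by
    have e1 : (fun q => (∑ i, F i * pderiv u i q) * E q)
        = fun q => ∑ i, F i * (pderiv u i q * E q) := by
      funext q; rw [Finset.sum_mul]
      exact Finset.sum_congr rfl fun i _ => by ring
    have e2 : (fun q => (∑ i, F i * pderiv V i q) * u q * E q)
        = fun q => ∑ i, F i * (pderiv V i q * u q * E q) := by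
      funext q; rw [Finset.sum_mul, Finset.sum_mul]
      exact Finset.sum_congr rfl fun i _ => by ring
    rw [e1, e2]
    rw [integral_finset_sum (f := fun i q => F i * (pderiv u i q * E q)) _ fun i _ => integrableOn_box
      (continuous_const.mul (((cPu i).continuous).mul hEc)) L]
    rw [integral_finset_sum (f := fun i q => F i * (pderiv V i q * u q * E q)) _ fun i _ => integrableOn_box
      (continuous_const.mul ((((cPV i).continuous).mul hu.continuous).mul hEc)) L]
    rw [Finset.mul_sum]
    refine Finset.sum_congr rfl fun i _ => ?_
    rw [integral_const_mul, integral_const_mul, hB i]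
    ring
  -- ## Assembly
  rw [integral_mubar_eq hZpos hVc, integral_mubar_eq hZpos hVc]
  have hsq : (fun q => E q * (∑ i, (F i + pderiv u i q) ^ 2))
      = fun q => (∑ i, F i ^ 2) * E q + (2 * ((∑ i, F i * pderiv u i q) * E q)
        + (∑ i, pderiv u i q ^ 2) * E q) := by
    funext q
    have h : (∑ i, (F i + pderiv u i q) ^ 2)
        = (∑ i, F i ^ 2) + (2 * (∑ i, F i * pderiv u i q) + ∑ i, pderiv u i q ^ 2) := by
      rw [Finset.mul_sum, ← Finset.sum_add_distrib, ← Finset.sum_add_distrib]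
      exact Finset.sum_congr rfl fun i _ => by ring
    rw [h]; ring
  rw [show (fun q => E q * (∑ i, (F i + pderiv u i q) ^ 2)) = _ from hsq]
  have hiF : IntegrableOn (fun q => (∑ i, F i ^ 2) * E q) (box d L) :=
    integrableOn_box (continuous_const.mul hEc) L
  have hi2 : IntegrableOn (fun q => 2 * ((∑ i, F i * pderiv u i q) * E q)) (box d L) :=
    integrableOn_box (continuous_const.mul
      (((continuous_finset_sum _ fun j _ => continuous_const.mul (cPu j).continuous)).mul
        hEc)) L
  have hi3 : IntegrableOn (fun q => (∑ i, pderiv u i q ^ 2) * E q) (box d L) :=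
    integrableOn_box ((continuous_finset_sum _ fun j _ => ((cPu j).continuous).pow 2).mul
      hEc) L
  have hi23 : IntegrableOn (fun q => 2 * ((∑ i, F i * pderiv u i q) * E q)
      + (∑ i, pderiv u i q ^ 2) * E q) (box d L) := hi2.add hi3
  rw [integral_add hiF hi23, integral_add hi2 hi3, integral_const_mul,
    integral_const_mul, hD, hIB]
  have hEq : (fun q => E q * ((∑ i, F i * pderiv V i q) * u q))
      = fun q => (∑ i, F i * pderiv V i q) * u q * E q := by
    funext q; ring
  rw [hEq]
  have hZE : (∫ q in box d L, E q) = Ztil := hZ.symm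
  rw [hZE]
  have hne : Ztil ≠ 0 := hZpos.ne'
  field_simp
  ring
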